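/- Let A and B be unital C*-algebras and T₀ : A → B a real-linear surjection with T₀(1_A)=1_B satisfying T₀(a b a) = T₀(a) T₀(b) T₀(a) for all a, b ∈ A. Then T₀(i·1_A) commutes with every element of B; consequently P = (−i·T₀(i·1_A) + 1_B)/2 is a central projection in B. -/
import Mathlib

theorem stmtN
    {A B : Type*}
    [NormedRing A] [StarRing A] [CStarRing A] [NormedAlgebra ℂ A]
    [CompleteSpace A] [StarModule ℂ A]
    [NormedRing B] [StarRing B] [CStarRing B] [NormedAlgebra ℂ B]
    [CompleteSpace B] [StarModule ℂ B]
    (T₀ : A →ₗ[ℝ] B)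
    (hsurj : Function.Surjective T₀)
    (hone : T₀ 1 = 1)
    (haba : ∀ a b : A, T₀ (a * b * a) = T₀ a * T₀ b * T₀ a) :
    (∀ b : B, T₀ ((Complex.I : ℂ) • (1 : A)) * b = b * T₀ ((Complex.I : ℂ) • (1 : A))) ∧
      (let P : B := (2 : ℂ)⁻¹ • ((-Complex.I : ℂ) • T₀ ((Complex.I : ℂ) • (1 : A)) + 1)
       P * P = P ∧ star P = P ∧ ∀ b : B, P * b = b * P) := by
  set u : B := T₀ ((Complex.I : ℂ) • (1 : A)) with hu
  -- key: u * y * u = -y for all y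
  have key : ∀ y : B, u * y * u = -y := by
    intro y
    obtain ⟨b, rfl⟩ := hsurj y
    have h1 : ((Complex.I : ℂ) • (1 : A)) * b * ((Complex.I : ℂ) • (1 : A)) = -b := by
      simp [smul_mul_assoc, mul_smul_comm, smul_smul, Complex.I_mul_I, neg_smul]
    have := haba ((Complex.I : ℂ) • (1 : A)) b
    rw [h1, map_neg] at this
    exact this.symm
  have husq : u * u = -1 := by
    have := key 1
    rwa [mul_one] at this
  have hcent : ∀ b : B, u * b = b * u := by
    intro b
    have h := key b
    have := congrArg (· * u) h
    simp only [mul_assoc, husq] at this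
    -- this : u * (b * -1) = -b * u
    rw [mul_neg_one, mul_neg, neg_mul, neg_inj] at this
    exact this
  refine ⟨hcent, ?_⟩
  intro P
  have hPdef : P = (2 : ℂ)⁻¹ • ((-Complex.I : ℂ) • u + 1) := rfl
  have hPc : ∀ b : B, P * b = b * P := by
    intro b
    rw [hPdef, smul_mul_assoc, mul_smul_comm, add_mul, mul_add, one_mul, mul_one,
      smul_mul_assoc, mul_smul_comm, hcent]
  have hidem : P * P = P := by
    rw [hPdef, smul_mul_smul_comm, add_mul, mul_add, mul_add, one_mul, mul_one,
      smul_mul_smul_comm, husq]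
    rw [show ((-Complex.I : ℂ) * -Complex.I) • (-1 : B) = 1 by
      simp [neg_mul_neg, Complex.I_mul_I, neg_smul]]
    simp only [mul_one]
    module
  refine ⟨hidem, ?_, hPc⟩
  -- star P = P since P is a central idempotent
  set Q : B := star P with hQ
  have hQP : Q * P = P * Q := (hPc Q).symm
  have hstarPQ : star (P * Q) = P * Q := by
    rw [hQ, star_mul, star_star]
  have ha : (P - P * Q) * star (P - P * Q) = 0 := by
    have hs : star (P - P * Q) = Q - P * Q := by
      rw [star_sub, hstarPQ, hQ]
    rw [hs, sub_mul, mul_sub, mul_sub]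
    have e1 : P * (P * Q) = P * Q := by rw [← mul_assoc, hidem]
    have e2 : P * Q * Q = P * (Q * Q) := by rw [mul_assoc]
    have e3 : P * Q * (P * Q) = P * (Q * Q) := by
      rw [mul_assoc P Q (P * Q), ← mul_assoc Q P Q, hQP, mul_assoc P Q Q,
        ← mul_assoc P P (Q * Q), hidem]
    rw [e1, e2, e3]
    abel
  have hzero : P - P * Q = 0 := (CStarRing.mul_star_self_eq_zero_iff _).mp ha
  have hPQ : P = P * Q := by rwa [sub_eq_zero] at hzero
  calc star P = star (P * Q) := by rw [← hPQ]
    _ = P * Q := hstarPQ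
    _ = P := hPQ.symm
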